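/- Let K and M be integers with 1 ≤ M ≤ K−1 and let λ_1 ≥ λ_2 ≥ ⋯ ≥ λ_K > 0 be real numbers. Define Γ₀ = min over i ∈ {K−M,…,K} of min{1, p({i}, {K−M,…,K}∖{i}) · p_W(1) / (p(1, {2,…,M+1}) · p_W(i))}, and for each w ∈ {1,…,K} and each M-element subset s of {1,…,K}∖{w}, define Γ(w,s) = Γ₀ · p(1, {2,…,M+1}) · p_W(w) / (p(w,s) · p_W(1)). Then Γ₀ > 0 and 0 < Γ(w,s) ≤ 1 for every such pair (w,s). -/

import Mathlib

/-!
Cancelling `λ_w / C(K,M)`, the ratio `p(w,s) / p_W(w)` equals `λ_s̄⁻¹ / Z(w)` with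
`Z(w) = Σ_s λ_s̄⁻¹`. The pivot `i = max w (K-M)` with `t = {K-M,…,K} ∖ {i}` dominates every
admissible pair `(w,s)`: `t` consists of the `M` least popular indices other than `i`, so
`λ_s̄ ≤ λ_t̄`, and exchanging `w ↔ i` shows that `Z` is monotone in the index, so `Z(w) ≤ Z(i)`.
Hence `p(i,t) / p_W(i) ≤ p(w,s) / p_W(w)`, which combined with `Γ₀ ≤` its `i`-th term gives
`Γ(w,s) ≤ 1`; positivity is immediate since every `λ_s̄` with `|s| < K` is positive.
-/

/-- `lbar K lam T = Σ_{k ∈ {1,…,K} \ T} λ_k`. -/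
noncomputable def lbar (K : ℕ) (lam : ℕ → ℝ) (T : Finset ℕ) : ℝ :=
  ∑ k ∈ Finset.Icc 1 K \ T, lam k

/-- The joint pmf `p(w, s) = (1 / C(K,M)) · λ_w / λ_s̄`. -/
noncomputable def pjoint (K M : ℕ) (lam : ℕ → ℝ) (w : ℕ) (s : Finset ℕ) : ℝ :=
  (1 / (K.choose M : ℝ)) * (lam w / lbar K lam s)

/-- The marginal `p_W(w) = Σ_s p(w, s)`, summed over `M`-subsets of `{1,…,K} \ {w}`. -/
noncomputable def pW (K M : ℕ) (lam : ℕ → ℝ) (w : ℕ) : ℝ :=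
  ∑ s ∈ Finset.powersetCard M ((Finset.Icc 1 K).erase w), pjoint K M lam w s

/-- `Γ₀ = min_{i ∈ {K−M,…,K}} min{1, p(i, {K−M,…,K}∖{i}) · p_W(1) / (p(1, {2,…,M+1}) · p_W(i))}`. -/
noncomputable def gamma0 (K M : ℕ) (lam : ℕ → ℝ) : ℝ :=
  (Finset.Icc (K - M) K).inf' (Finset.nonempty_Icc.mpr (Nat.sub_le K M))
    (fun i => min 1
      (pjoint K M lam i ((Finset.Icc (K - M) K).erase i) * pW K M lam 1
        / (pjoint K M lam 1 (Finset.Icc 2 (M + 1)) * pW K M lam i)))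

/-- `Γ(w, s) = Γ₀ · p(1, {2,…,M+1}) · p_W(w) / (p(w, s) · p_W(1))`,
with an arbitrary constant `g0` in place of `Γ₀`. -/
noncomputable def gammaWS (K M : ℕ) (lam : ℕ → ℝ) (g0 : ℝ) (w : ℕ) (s : Finset ℕ) : ℝ :=
  g0 * pjoint K M lam 1 (Finset.Icc 2 (M + 1)) * pW K M lam w
    / (pjoint K M lam w s * pW K M lam 1)

open Finset

theorem Finset.sum_le_sum_of_card_eq_of_forall_sdiff_le {ι M : Type*} [DecidableEq ι]
    [AddCommMonoid M] [LinearOrder M] [IsOrderedCancelAddMonoid M] {A B : Finset ι}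
    {f : ι → M} (hcard : #A = #B) (h : ∀ a ∈ A \ B, ∀ b ∈ B \ A, f a ≤ f b) :
    ∑ x ∈ A, f x ≤ ∑ x ∈ B, f x := by
  rw [← sum_sdiff_le_sum_sdiff]
  have hcard' := card_sdiff_comm hcard
  obtain hempty | hne := (A \ B).eq_empty_or_nonempty
  · rw [hempty, card_empty, eq_comm, card_eq_zero] at hcard'
    simp [hempty, hcard']
  · calc ∑ x ∈ A \ B, f x ≤ #(A \ B) • (A \ B).sup' hne f :=
          sum_le_card_nsmul _ _ _ fun a ha => le_sup' f ha
      _ = #(B \ A) • (A \ B).sup' hne f := by rw [hcard']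
      _ ≤ ∑ x ∈ B \ A, f x :=
          card_nsmul_le_sum _ _ _ fun b hb => sup'_le hne f fun a ha => h a ha b hb

/-- `Z(w) = Σ_s λ_s̄⁻¹`, summed over `M`-subsets of `{1,…,K} ∖ {w}`. -/
noncomputable def invLbarSum (K M : ℕ) (lam : ℕ → ℝ) (w : ℕ) : ℝ :=
  ∑ s ∈ powersetCard M ((Icc 1 K).erase w), (lbar K lam s)⁻¹

section

variable {K M : ℕ} {lam : ℕ → ℝ}

lemma lbar_pos (hpos : ∀ i, 1 ≤ i → i ≤ K → 0 < lam i) {T : Finset ℕ} {j : ℕ}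
    (hj : j ∈ Icc 1 K) (hjT : j ∉ T) : 0 < lbar K lam T := by
  refine sum_pos' (fun k hk => ?_) ⟨j, mem_sdiff.2 ⟨hj, hjT⟩, ?_⟩
  · obtain ⟨hk1, hkK⟩ := mem_Icc.1 (mem_sdiff.1 hk).1
    exact (hpos k hk1 hkK).le
  · exact hpos j (mem_Icc.1 hj).1 (mem_Icc.1 hj).2

lemma lbar_le_lbar {T T' : Finset ℕ} (hT : T ⊆ Icc 1 K) (hT' : T' ⊆ Icc 1 K)
    (h : ∑ k ∈ T', lam k ≤ ∑ k ∈ T, lam k) : lbar K lam T ≤ lbar K lam T' := by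
  rw [lbar, lbar, sum_sdiff_eq_sub hT, sum_sdiff_eq_sub hT']
  linarith

lemma pjoint_pos (hpos : ∀ i, 1 ≤ i → i ≤ K → 0 < lam i) (hMK : M ≤ K) {w : ℕ}
    (hw : w ∈ Icc 1 K) {T : Finset ℕ} (hwT : w ∉ T) : 0 < pjoint K M lam w T := by
  have hC : (0 : ℝ) < K.choose M := by exact_mod_cast Nat.choose_pos hMK
  have hlam := hpos w (mem_Icc.1 hw).1 (mem_Icc.1 hw).2
  have hlbar := lbar_pos hpos hw hwT
  unfold pjoint
  positivity

lemma invLbarSum_pos (hpos : ∀ i, 1 ≤ i → i ≤ K → 0 < lam i) (hMK : M + 1 ≤ K) {w : ℕ}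
    (hw : w ∈ Icc 1 K) : 0 < invLbarSum K M lam w := by
  refine sum_pos (fun s hs => inv_pos.2 (lbar_pos hpos hw ?_)) ?_
  · exact (subset_erase.1 (mem_powersetCard.1 hs).1).2
  · rw [powersetCard_nonempty, card_erase_of_mem hw, Nat.card_Icc]
    omega

lemma pW_eq_mul_invLbarSum (w : ℕ) :
    pW K M lam w = 1 / (K.choose M : ℝ) * lam w * invLbarSum K M lam w := by
  rw [pW, invLbarSum, mul_sum]
  exact sum_congr rfl fun s _ => by rw [pjoint, div_eq_mul_inv]; ring

lemma pW_pos (hpos : ∀ i, 1 ≤ i → i ≤ K → 0 < lam i) (hMK : M + 1 ≤ K) {w : ℕ}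
    (hw : w ∈ Icc 1 K) : 0 < pW K M lam w := by
  have hC : (0 : ℝ) < K.choose M := by exact_mod_cast Nat.choose_pos (by omega : M ≤ K)
  have hlam := hpos w (mem_Icc.1 hw).1 (mem_Icc.1 hw).2
  have hZ := invLbarSum_pos hpos hMK hw
  rw [pW_eq_mul_invLbarSum]
  positivity

lemma pjoint_div_pW (hMK : M ≤ K) {w : ℕ} (hw : lam w ≠ 0) (s : Finset ℕ) :
    pjoint K M lam w s / pW K M lam w = (lbar K lam s)⁻¹ / invLbarSum K M lam w := by
  have hC : (K.choose M : ℝ) ≠ 0 := by exact_mod_cast (Nat.choose_pos hMK).ne'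
  rw [pjoint, pW_eq_mul_invLbarSum, div_eq_mul_inv (lam w), ← mul_assoc]
  exact mul_div_mul_left _ _ (by positivity)

lemma invLbarSum_le_invLbarSum (hpos : ∀ i, 1 ≤ i → i ≤ K → 0 < lam i)
    (hmono : ∀ i j, 1 ≤ i → i ≤ j → j ≤ K → lam j ≤ lam i) {w i : ℕ}
    (hw : 1 ≤ w) (hwi : w ≤ i) (hiK : i ≤ K) :
    invLbarSum K M lam w ≤ invLbarSum K M lam i := by
  have hwI : w ∈ Icc 1 K := mem_Icc.2 ⟨hw, hwi.trans hiK⟩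
  have hiI : i ∈ Icc 1 K := mem_Icc.2 ⟨hw.trans hwi, hiK⟩
  set σ := Equiv.swap w i
  have hσ : ((Icc 1 K).erase i).map σ.toEmbedding = (Icc 1 K).erase w := by
    rw [map_erase, Equiv.toEmbedding_apply, Equiv.swap_apply_right, map_perm]
    intro x hx
    rcases (Equiv.swap_apply_ne_self_iff.1 hx).2 with rfl | rfl <;> assumption
  rw [invLbarSum, invLbarSum, ← hσ, powersetCard_map, sum_map]
  refine sum_le_sum fun s hs => ?_
  have hs' := (mem_powersetCard.1 hs).1
  obtain ⟨hsI, his⟩ := subset_erase.1 hs'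
  have hσs : s.map σ.toEmbedding ⊆ Icc 1 K := by
    have := (map_subset_map (f := σ.toEmbedding)).2 hs'
    rw [hσ] at this
    exact this.trans (erase_subset _ _)
  change (lbar K lam (s.map σ.toEmbedding))⁻¹ ≤ _
  refine inv_anti₀ (lbar_pos hpos hiI his) (lbar_le_lbar hsI hσs ?_)
  rw [sum_map]
  refine sum_le_sum fun x hx => ?_
  have hxi : x ≠ i := ne_of_mem_of_not_mem hx his
  by_cases hxw : x = w
  · subst hxw
    simpa [σ] using hmono x i hw hwi hiK
  · simp [σ, Equiv.swap_apply_of_ne_of_ne hxw hxi]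

lemma sum_Icc_erase_max_le (hmono : ∀ i j, 1 ≤ i → i ≤ j → j ≤ K → lam j ≤ lam i)
    (hMK : M ≤ K) {w : ℕ} (hw : w ∈ Icc 1 K) {s : Finset ℕ}
    (hs : s ∈ powersetCard M ((Icc 1 K).erase w)) :
    ∑ k ∈ (Icc (K - M) K).erase (max w (K - M)), lam k ≤ ∑ k ∈ s, lam k := by
  obtain ⟨hsub, hcard⟩ := mem_powersetCard.1 hs
  obtain ⟨hsI, hws⟩ := subset_erase.1 hsub
  obtain ⟨hw1, hwK⟩ := mem_Icc.1 hw
  refine sum_le_sum_of_card_eq_of_forall_sdiff_le ?_ fun a ha b hb => ?_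
  · rw [card_erase_of_mem (mem_Icc.2 ⟨le_max_right _ _, max_le hwK (Nat.sub_le _ _)⟩),
      Nat.card_Icc, hcard]
    omega
  · rw [mem_sdiff, mem_erase, mem_Icc] at ha hb
    obtain ⟨hb1, hbK⟩ := mem_Icc.1 (hsI hb.1)
    have hbw : b ≠ w := ne_of_mem_of_not_mem hb.1 hws
    exact hmono b a hb1 (by omega) ha.1.2.2

lemma pjoint_div_pW_le_of_max (hpos : ∀ i, 1 ≤ i → i ≤ K → 0 < lam i)
    (hmono : ∀ i j, 1 ≤ i → i ≤ j → j ≤ K → lam j ≤ lam i) (hMK : M + 1 ≤ K) {w : ℕ}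
    (hw : w ∈ Icc 1 K) {s : Finset ℕ} (hs : s ∈ powersetCard M ((Icc 1 K).erase w)) :
    pjoint K M lam (max w (K - M)) ((Icc (K - M) K).erase (max w (K - M)))
        / pW K M lam (max w (K - M)) ≤
      pjoint K M lam w s / pW K M lam w := by
  obtain ⟨hw1, hwK⟩ := mem_Icc.1 hw
  set i := max w (K - M)
  have hiK : i ≤ K := max_le hwK (Nat.sub_le _ _)
  have hiI : i ∈ Icc 1 K := mem_Icc.2 ⟨hw1.trans (le_max_left _ _), hiK⟩
  have htI : (Icc (K - M) K).erase i ⊆ Icc 1 K :=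
    (erase_subset _ _).trans (Icc_subset_Icc (by omega) le_rfl)
  rw [pjoint_div_pW (by omega) (hpos w hw1 hwK).ne',
    pjoint_div_pW (by omega) (hpos i (mem_Icc.1 hiI).1 hiK).ne']
  obtain ⟨hsI, hws⟩ := subset_erase.1 (mem_powersetCard.1 hs).1
  have hlbar_s := lbar_pos hpos hw hws
  have hlbar_le : lbar K lam s ≤ lbar K lam ((Icc (K - M) K).erase i) :=
    lbar_le_lbar hsI htI (sum_Icc_erase_max_le hmono (by omega) hw hs)
  exact div_le_div₀ (inv_nonneg.2 hlbar_s.le) (inv_anti₀ hlbar_s hlbar_le)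
    (invLbarSum_pos hpos hMK hw)
    (invLbarSum_le_invLbarSum hpos hmono hw1 (le_max_left _ _) hiK)

lemma gamma0_le {i : ℕ} (hi : i ∈ Icc (K - M) K) :
    gamma0 K M lam ≤ pjoint K M lam i ((Icc (K - M) K).erase i) * pW K M lam 1
      / (pjoint K M lam 1 (Icc 2 (M + 1)) * pW K M lam i) :=
  (inf'_le _ hi).trans (min_le_right _ _)

lemma gamma0_pos (hpos : ∀ i, 1 ≤ i → i ≤ K → 0 < lam i) (hMK : M + 1 ≤ K) :
    0 < gamma0 K M lam := by
  have h1 : 1 ∈ Icc 1 K := mem_Icc.2 ⟨le_rfl, by omega⟩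
  refine (lt_inf'_iff _).2 fun i hi => lt_min one_pos (div_pos ?_ ?_)
  all_goals have hiI : i ∈ Icc 1 K := Icc_subset_Icc (by omega) le_rfl hi
  · exact mul_pos (pjoint_pos hpos (by omega) hiI (notMem_erase i _)) (pW_pos hpos hMK h1)
  · exact mul_pos (pjoint_pos hpos (by omega) h1 (by simp)) (pW_pos hpos hMK hiI)

end

theorem stmt8_general {K M : ℕ} (hMK : M + 1 ≤ K) (lam : ℕ → ℝ)
    (hmono : ∀ i j, 1 ≤ i → i ≤ j → j ≤ K → lam j ≤ lam i)
    (hpos : ∀ i, 1 ≤ i → i ≤ K → 0 < lam i) :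
    0 < gamma0 K M lam ∧
    ∀ w ∈ Finset.Icc 1 K, ∀ s ∈ Finset.powersetCard M ((Finset.Icc 1 K).erase w),
      0 < gammaWS K M lam (gamma0 K M lam) w s ∧
        gammaWS K M lam (gamma0 K M lam) w s ≤ 1 := by
  have hg0 := gamma0_pos hpos hMK
  refine ⟨hg0, fun w hw s hs => ?_⟩
  set i := max w (K - M)
  have hiI : i ∈ Icc (K - M) K := mem_Icc.2 ⟨le_max_right _ _, max_le (mem_Icc.1 hw).2 (by omega)⟩
  have h1 : 1 ∈ Icc 1 K := mem_Icc.2 ⟨le_rfl, by omega⟩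
  have hp1 := pjoint_pos (M := M) hpos (by omega) h1 (T := Icc 2 (M + 1)) (by simp)
  have hpws := pjoint_pos (M := M) hpos (by omega) hw
    (subset_erase.1 (mem_powersetCard.1 hs).1).2
  have hpW1 := pW_pos hpos hMK h1
  have hpWw := pW_pos hpos hMK hw
  have hpWi := pW_pos hpos hMK (Icc_subset_Icc (by omega) le_rfl hiI)
  refine ⟨by rw [gammaWS]; positivity, ?_⟩
  rw [gammaWS, div_le_one (by positivity)]
  calc gamma0 K M lam * pjoint K M lam 1 (Icc 2 (M + 1)) * pW K M lam w
      = gamma0 K M lam * (pjoint K M lam 1 (Icc 2 (M + 1)) * pW K M lam i)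
          * (pW K M lam w / pW K M lam i) := by field_simp
    _ ≤ pjoint K M lam i ((Icc (K - M) K).erase i) * pW K M lam 1
          * (pW K M lam w / pW K M lam i) := by
        gcongr ?_ * _
        exact (le_div_iff₀ (by positivity)).1 (gamma0_le hiI)
    _ = pjoint K M lam i ((Icc (K - M) K).erase i) / pW K M lam i * pW K M lam w
          * pW K M lam 1 := by ring
    _ ≤ pjoint K M lam w s / pW K M lam w * pW K M lam w * pW K M lam 1 := by
        gcongr ?_ * _ * _
        exact pjoint_div_pW_le_of_max hpos hmono hMK hw hs
    _ = pjoint K M lam w s * pW K M lam 1 := by field_simp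

theorem stmt8 {K M : ℕ} (hM : 1 ≤ M) (hMK : M + 1 ≤ K) (lam : ℕ → ℝ)
    (hmono : ∀ i j, 1 ≤ i → i ≤ j → j ≤ K → lam j ≤ lam i)
    (hpos : ∀ i, 1 ≤ i → i ≤ K → 0 < lam i) :
    0 < gamma0 K M lam ∧
    ∀ w ∈ Finset.Icc 1 K, ∀ s ∈ Finset.powersetCard M ((Finset.Icc 1 K).erase w),
      0 < gammaWS K M lam (gamma0 K M lam) w s ∧
        gammaWS K M lam (gamma0 K M lam) w s ≤ 1 :=
  stmt8_general hMK lam hmono hpos
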